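/- arXiv:1901.01218 — 2 statements merged into one kernel-verified Lean document; each statement's English description precedes it below -/
import Mathlib

section
/- The theta-nulls satisfy Jacobi's quartic identity θ₂(q)⁴ + θ₄(q)⁴ = θ₃(q)⁴ for all q ∈ (0,1). -/
noncomputable section

/-- Theta-null `θ₂(q) = ∑_{k∈ℤ} q^{(k+1/2)²}`. -/
def theta2 (q : ℝ) : ℝ := ∑' k : ℤ, q ^ (((k : ℝ) + 1/2)^2)

/-- Theta-null `θ₃(q) = ∑_{k∈ℤ} q^{k²}`. -/
def theta3 (q : ℝ) : ℝ := ∑' k : ℤ, q ^ (k^2)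

/-- Theta-null `θ₄(q) = ∑_{k∈ℤ} (-1)^k q^{k²}`. -/
def theta4 (q : ℝ) : ℝ := ∑' k : ℤ, (-1 : ℝ) ^ k * q ^ (k^2)

/-- Jacobi theta function `θ₃(z,q) = ∑_{k∈ℤ} q^{k²} e^{2πikz}` (real-valued for real z, q∈(0,1)). -/
def jTheta3 (z q : ℝ) : ℝ :=
  (∑' k : ℤ, (q : ℂ) ^ (k^2) * Complex.exp (2 * Real.pi * Complex.I * k * z)).re

/-- Jacobi theta function as a complex number. -/
def jTheta3C (z q : ℝ) : ℂ :=
  ∑' k : ℤ, (q : ℂ) ^ (k^2) * Complex.exp (2 * Real.pi * Complex.I * k * z)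

/-- Gauss hypergeometric series `₂F₁(a,b;c;x)`. -/
def hyp2F1 (a b c x : ℝ) : ℝ :=
  ∑' n : ℕ, ((ascPochhammer ℝ n).eval a * (ascPochhammer ℝ n).eval b /
    (ascPochhammer ℝ n).eval c) * x ^ n / (n.factorial : ℝ)

/-- Borwein cubic theta function `a(q)`. -/
def borA (q : ℝ) : ℝ := ∑' p : ℤ × ℤ, q ^ (p.1^2 + p.1 * p.2 + p.2^2)

/-- Borwein cubic theta function `b(q)` (real-valued). -/
def borB (q : ℝ) : ℝ :=
  (∑' p : ℤ × ℤ, (q : ℂ) ^ (p.1^2 + p.1 * p.2 + p.2^2) *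
    Complex.exp (2 * Real.pi * Complex.I * (((p.1 : ℝ) - (p.2 : ℝ)) / 3))).re

/-- Borwein cubic theta function `c(q)`. -/
def borC (q : ℝ) : ℝ :=
  ∑' p : ℤ × ℤ, q ^ ((((p.1 : ℝ)) + 1/3)^2 + ((p.1 : ℝ) + 1/3) * ((p.2 : ℝ) + 1/3) +
    (((p.2 : ℝ)) + 1/3)^2)

/-- Periodized Gaussian (heat kernel) on the torus ℝ²/(Sℤ²). -/
def heatK (S : Matrix.SpecialLinearGroup (Fin 2) ℝ) (t : ℝ) (z : Fin 2 → ℝ) : ℝ :=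
  (1/t) * ∑' l : Fin 2 → ℤ,
    Real.exp (-(Real.pi / t) *
      (((S : Matrix (Fin 2) (Fin 2) ℝ).mulVec (fun i => (l i : ℝ) + z i) 0)^2 +
       ((S : Matrix (Fin 2) (Fin 2) ℝ).mulVec (fun i => (l i : ℝ) + z i) 1)^2))

end


namespace JacobiQuarticAux

abbrev P : Type := (ℤ × ℤ) × ℤ × ℤ

def Nq (v : P) : ℤ := v.1.1 ^ 2 + v.1.2 ^ 2 + v.2.1 ^ 2 + v.2.2 ^ 2

def sg (v : P) : ℤ := v.1.1 + v.1.2 + v.2.1 + v.2.2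

noncomputable def E2 (v : P) : ℝ :=
  ((v.1.1 : ℝ) + 1/2) ^ 2 + ((v.1.2 : ℝ) + 1/2) ^ 2 +
    ((v.2.1 : ℝ) + 1/2) ^ 2 + ((v.2.2 : ℝ) + 1/2) ^ 2

/-- half Hadamard transform (minus half): from odd-sum quadruples to even-sum quadruples -/
def phi (a : P) : P :=
  (((a.1.1 + a.1.2 + a.2.1 + a.2.2 - 1)/2, (a.1.1 + a.1.2 - a.2.1 - a.2.2 - 1)/2),
    (a.1.1 - a.1.2 + a.2.1 - a.2.2 - 1)/2, (a.1.1 - a.1.2 - a.2.1 + a.2.2 - 1)/2)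

def psi (v : P) : P :=
  (((v.1.1 + v.1.2 + v.2.1 + v.2.2 + 2)/2, (v.1.1 + v.1.2 - v.2.1 - v.2.2)/2),
    (v.1.1 - v.1.2 + v.2.1 - v.2.2)/2, (v.1.1 - v.1.2 - v.2.1 + v.2.2)/2)

lemma phi_spec (a : P) (h : Odd (sg a)) :
    2 * (phi a).1.1 + 1 = a.1.1 + a.1.2 + a.2.1 + a.2.2 ∧
    2 * (phi a).1.2 + 1 = a.1.1 + a.1.2 - a.2.1 - a.2.2 ∧
    2 * (phi a).2.1 + 1 = a.1.1 - a.1.2 + a.2.1 - a.2.2 ∧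
    2 * (phi a).2.2 + 1 = a.1.1 - a.1.2 - a.2.1 + a.2.2 := by
  obtain ⟨m, hm⟩ := h
  unfold sg at hm
  unfold phi
  refine ⟨?_, ?_, ?_, ?_⟩ <;> dsimp only <;> omega

lemma sg_phi (a : P) (h : Odd (sg a)) : sg (phi a) = 2 * a.1.1 - 2 := by
  obtain ⟨h1, h2, h3, h4⟩ := phi_spec a h
  unfold sg phi at *
  omega

lemma phi_inj (a b : P) (ha : Odd (sg a)) (hb : Odd (sg b)) (h : phi a = phi b) : a = b := by
  obtain ⟨ha1, ha2, ha3, ha4⟩ := phi_spec a ha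
  obtain ⟨hb1, hb2, hb3, hb4⟩ := phi_spec b hb
  rw [h] at ha1 ha2 ha3 ha4
  obtain ⟨⟨a1, a2⟩, a3, a4⟩ := a
  obtain ⟨⟨b1, b2⟩, b3, b4⟩ := b
  simp only [Prod.mk.injEq] at *
  omega

lemma sg_psi (v : P) (h : Even (sg v)) : sg (psi v) = 2 * v.1.1 + 1 := by
  obtain ⟨m, hm⟩ := h
  unfold sg psi at *
  dsimp only
  omega

lemma phi_psi (v : P) (h : Even (sg v)) : phi (psi v) = v := by
  obtain ⟨m, hm⟩ := h
  unfold sg at hm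
  obtain ⟨⟨v1, v2⟩, v3, v4⟩ := v
  unfold psi phi
  simp only [Prod.mk.injEq] at *
  refine ⟨⟨?_, ?_⟩, ?_, ?_⟩ <;> omega

lemma E2_phi (a : P) (h : Odd (sg a)) : E2 (phi a) = ((Nq a : ℤ) : ℝ) := by
  obtain ⟨h1, h2, h3, h4⟩ := phi_spec a h
  have e1 : ((phi a).1.1 : ℝ) + 1/2 = ((a.1.1 : ℝ) + a.1.2 + a.2.1 + a.2.2)/2 := by
    have := congrArg (fun n : ℤ => (n : ℝ)) h1; push_cast at this; linarith
  have e2 : ((phi a).1.2 : ℝ) + 1/2 = ((a.1.1 : ℝ) + a.1.2 - a.2.1 - a.2.2)/2 := by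
    have := congrArg (fun n : ℤ => (n : ℝ)) h2; push_cast at this; linarith
  have e3 : ((phi a).2.1 : ℝ) + 1/2 = ((a.1.1 : ℝ) - a.1.2 + a.2.1 - a.2.2)/2 := by
    have := congrArg (fun n : ℤ => (n : ℝ)) h3; push_cast at this; linarith
  have e4 : ((phi a).2.2 : ℝ) + 1/2 = ((a.1.1 : ℝ) - a.1.2 - a.2.1 + a.2.2)/2 := by
    have := congrArg (fun n : ℤ => (n : ℝ)) h4; push_cast at this; linarith
  unfold E2
  rw [e1, e2, e3, e4]
  unfold Nq
  push_cast
  ring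


noncomputable def g0 (q : ℝ) (a : P) : ℝ := if Odd (sg a) then q ^ Nq a else 0
noncomputable def s0 (q : ℝ) (v : P) : ℝ := if Even (sg v) then q ^ E2 v else 0
noncomputable def t0 (q : ℝ) (v : P) : ℝ := if Odd (sg v) then q ^ E2 v else 0


lemma jac_summable_aux {q : ℝ} (hq0 : 0 < q) (hq1 : q < 1) (c : ℝ) :
    Summable (fun k : ℤ => q ^ (((k : ℝ) + c) ^ 2)) := by
  have habs : Summable (fun k : ℤ => q ^ |(k : ℝ)|) := by
    apply Summable.of_nat_of_neg
    · apply Summable.congr (summable_geometric_of_lt_one hq0.le hq1)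
      intro n
      rw [show |(((n:ℤ)):ℝ)| = (n:ℝ) by push_cast; simp, ← Real.rpow_natCast q n]
    · apply Summable.congr (summable_geometric_of_lt_one hq0.le hq1)
      intro n
      rw [show |(((-n:ℤ)):ℝ)| = (n:ℝ) by push_cast; simp, ← Real.rpow_natCast q n]
  refine Summable.of_nonneg_of_le (fun k => Real.rpow_nonneg hq0.le _) ?_
    (habs.mul_left (q ^ (-(2*|c|+1))))
  intro k
  rw [← Real.rpow_add hq0]
  apply Real.rpow_le_rpow_of_exponent_ge hq0 hq1.le
  have h1 : |(k:ℝ)| ≤ |(k:ℝ) + c| + |c| := by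
    calc |(k:ℝ)| = |((k:ℝ) + c) + (-c)| := by ring_nf
    _ ≤ |(k:ℝ)+c| + |(-c)| := abs_add_le _ _
    _ = |(k:ℝ)+c| + |c| := by rw [abs_neg]
  nlinarith [sq_nonneg (|(k:ℝ)+c| - 1), sq_abs ((k:ℝ)+c), abs_nonneg c, abs_nonneg ((k:ℝ)+c)]


lemma abs_neg_one_zpow (k : ℤ) : |(-1 : ℝ) ^ k| = 1 := by
  rcases Int.even_or_odd k with h | h
  · rw [h.neg_one_zpow, abs_one]
  · rw [h.neg_one_zpow, abs_neg, abs_one]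

lemma jac_norm_summable_mul {ι ι' : Type*} {f : ι → ℝ} {g : ι' → ℝ}
    (hf : Summable fun i => |f i|) (hg : Summable fun j => |g j|) :
    Summable fun p : ι × ι' => |f p.1 * g p.2| := by
  have := summable_mul_of_summable_norm (R := ℝ) (f := fun i => |f i|) (g := fun j => |g j|)
    (by simpa using hf) (by simpa using hg)
  simpa [abs_mul] using this

lemma jac_tsum_mul {ι ι' : Type*} {f : ι → ℝ} {g : ι' → ℝ}
    (hf : Summable fun i => |f i|) (hg : Summable fun j => |g j|) :
    (∑' i, f i) * (∑' j, g j) = ∑' p : ι × ι', f p.1 * g p.2 :=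
  tsum_mul_tsum_of_summable_norm (by simpa using hf) (by simpa using hg)

lemma jac_tsum_pow_four {f : ℤ → ℝ} (hf : Summable fun k => |f k|) :
    (∑' k, f k) ^ 4 =
      ∑' v : P, f v.1.1 * f v.1.2 * (f v.2.1 * f v.2.2) := by
  have h2 : (∑' k, f k) * (∑' k, f k) = ∑' p : ℤ × ℤ, f p.1 * f p.2 := jac_tsum_mul hf hf
  have h2s : Summable fun p : ℤ × ℤ => |f p.1 * f p.2| := jac_norm_summable_mul hf hf
  have h4 : (∑' p : ℤ × ℤ, f p.1 * f p.2) * (∑' p : ℤ × ℤ, f p.1 * f p.2)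
      = ∑' v : P, f v.1.1 * f v.1.2 * (f v.2.1 * f v.2.2) :=
    jac_tsum_mul (f := fun p : ℤ × ℤ => f p.1 * f p.2) (g := fun p : ℤ × ℤ => f p.1 * f p.2)
      h2s h2s
  calc (∑' k, f k) ^ 4 = ((∑' k, f k) * (∑' k, f k)) * ((∑' k, f k) * (∑' k, f k)) := by ring
  _ = _ := by rw [h2, h4]

lemma jac_summable_four {f : ℤ → ℝ} (hf : Summable fun k => |f k|) :
    Summable fun v : P => |f v.1.1 * f v.1.2 * (f v.2.1 * f v.2.2)| := by
  have h2s : Summable fun p : ℤ × ℤ => |f p.1 * f p.2| := jac_norm_summable_mul hf hf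
  exact jac_norm_summable_mul (f := fun p : ℤ × ℤ => f p.1 * f p.2)
    (g := fun p : ℤ × ℤ => f p.1 * f p.2) h2s h2s

end JacobiQuarticAux

open JacobiQuarticAux in
theorem jacobi_quartic_identity (q : ℝ) (hq : q ∈ Set.Ioo (0:ℝ) 1) :
    theta2 q ^ 4 + theta4 q ^ 4 = theta3 q ^ 4 := by
  obtain ⟨hq0, hq1⟩ := hq
  have hqne : q ≠ 0 := hq0.ne'
  have hrw3 : ∀ k : ℤ, q ^ (k ^ 2) = q ^ (((k : ℝ) + 0) ^ 2) := by
    intro k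
    rw [← Real.rpow_intCast q (k ^ 2)]
    congr 1
    push_cast
    ring
  have hs3 : Summable fun k : ℤ => |q ^ (k ^ 2)| := by
    apply (jac_summable_aux hq0 hq1 0).congr
    intro k
    rw [abs_of_pos (zpow_pos hq0 _), hrw3 k]
  have hs4 : Summable fun k : ℤ => |(-1 : ℝ) ^ k * q ^ (k ^ 2)| := by
    apply hs3.congr
    intro k
    rw [abs_mul, abs_neg_one_zpow, one_mul]
  have hs2 : Summable fun k : ℤ => |q ^ (((k : ℝ) + 1/2) ^ 2)| := by
    apply (jac_summable_aux hq0 hq1 (1/2)).congr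
    intro k
    rw [abs_of_pos (Real.rpow_pos_of_pos hq0 _)]
  -- expansions of the fourth powers as quadruple sums
  have H3 : theta3 q ^ 4 = ∑' v : P, q ^ Nq v := by
    unfold theta3
    rw [jac_tsum_pow_four hs3]
    exact tsum_congr fun v => by
      rw [Nq, zpow_add₀ hqne, zpow_add₀ hqne, zpow_add₀ hqne]
      ring
  have H4 : theta4 q ^ 4 = ∑' v : P, (-1 : ℝ) ^ sg v * q ^ Nq v := by
    unfold theta4
    rw [jac_tsum_pow_four hs4]
    exact tsum_congr fun v => by
      rw [Nq, sg, zpow_add₀ hqne, zpow_add₀ hqne, zpow_add₀ hqne,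
        zpow_add₀ (by norm_num : (-1:ℝ) ≠ 0), zpow_add₀ (by norm_num : (-1:ℝ) ≠ 0),
        zpow_add₀ (by norm_num : (-1:ℝ) ≠ 0)]
      ring
  have H2 : theta2 q ^ 4 = ∑' v : P, q ^ E2 v := by
    unfold theta2
    rw [jac_tsum_pow_four hs2]
    exact tsum_congr fun v => by
      rw [← Real.rpow_add hq0, ← Real.rpow_add hq0, ← Real.rpow_add hq0]
      congr 1
      rw [E2]
      ring
  -- summability of the quadruple sums
  have SB3 : Summable fun v : P => q ^ Nq v := by
    apply (jac_summable_four hs3).congr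
    intro v
    rw [abs_mul, abs_mul, abs_mul, abs_of_pos (zpow_pos hq0 _), abs_of_pos (zpow_pos hq0 _),
      abs_of_pos (zpow_pos hq0 _), abs_of_pos (zpow_pos hq0 _), Nq,
      zpow_add₀ hqne, zpow_add₀ hqne, zpow_add₀ hqne]
    ring
  have SB2 : Summable fun v : P => q ^ E2 v := by
    apply (jac_summable_four hs2).congr
    intro v
    rw [abs_mul, abs_mul, abs_mul, abs_of_pos (Real.rpow_pos_of_pos hq0 _),
      abs_of_pos (Real.rpow_pos_of_pos hq0 _), abs_of_pos (Real.rpow_pos_of_pos hq0 _),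
      abs_of_pos (Real.rpow_pos_of_pos hq0 _),
      ← Real.rpow_add hq0, ← Real.rpow_add hq0, ← Real.rpow_add hq0]
    congr 1
    rw [E2]
    ring
  have SG4 : Summable fun v : P => (-1:ℝ) ^ sg v * q ^ Nq v := by
    apply Summable.of_abs
    apply SB3.congr
    intro v
    rw [abs_mul, abs_neg_one_zpow, one_mul, abs_of_pos (zpow_pos hq0 _)]
  have Sind : Summable fun v : P => (if Odd (sg v) then 2 * q ^ Nq v else 0) := by
    apply Summable.of_nonneg_of_le _ _ (SB3.mul_left 2)
    · intro v
      by_cases h : Odd (sg v) <;> simp [h] <;> positivity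
    · intro v
      by_cases h : Odd (sg v) <;> simp [h]
      positivity
  have Ss : Summable (s0 q) := by
    apply Summable.of_nonneg_of_le _ _ SB2
    · intro v
      by_cases h : Even (sg v) <;> simp [s0, h, Real.rpow_nonneg hq0.le]
    · intro v
      by_cases h : Even (sg v) <;> simp [s0, h, Real.rpow_nonneg hq0.le]
  have St : Summable (t0 q) := by
    apply Summable.of_nonneg_of_le _ _ SB2
    · intro v
      by_cases h : Odd (sg v) <;> simp [t0, h, Real.rpow_nonneg hq0.le]
    · intro v
      by_cases h : Odd (sg v) <;> simp [t0, h, Real.rpow_nonneg hq0.le]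
  -- pointwise splittings
  have key3 : ∀ v : P, (q ^ Nq v : ℝ) =
      (-1:ℝ) ^ sg v * q ^ Nq v + (if Odd (sg v) then 2 * q ^ Nq v else 0) := by
    intro v
    by_cases h : Odd (sg v)
    · rw [if_pos h, Odd.neg_one_zpow h]
      ring
    · rw [if_neg h, (Int.not_odd_iff_even.mp h).neg_one_zpow]
      ring
  have key2 : ∀ v : P, (q ^ E2 v : ℝ) = s0 q v + t0 q v := by
    intro v
    by_cases h : Even (sg v)
    · rw [s0, t0, if_pos h, if_neg (Int.not_odd_iff_even.mpr h), add_zero]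
    · rw [s0, t0, if_neg h, if_pos (Int.not_even_iff_odd.mp h), zero_add]
  have E3 : theta3 q ^ 4 = theta4 q ^ 4 + ∑' v : P, (if Odd (sg v) then 2 * q ^ Nq v else 0) := by
    rw [H3, H4, tsum_congr key3, Summable.tsum_add SG4 Sind]
  have E2eq : theta2 q ^ 4 = (∑' v, s0 q v) + ∑' v, t0 q v := by
    rw [H2, tsum_congr key2, Summable.tsum_add Ss St]
  -- reflection: the odd part equals the even part for θ₂
  have inv : Function.Involutive (fun v : P => (((-v.1.1 - 1 : ℤ), v.1.2), v.2)) := by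
    intro v
    obtain ⟨⟨a, b⟩, c⟩ := v
    simp [Prod.ext_iff]
  have Est : (∑' v, t0 q v) = ∑' v, s0 q v := by
    rw [← (inv.toPerm _).tsum_eq (s0 q)]
    apply tsum_congr
    intro v
    have hpar : Even (sg (((-v.1.1 - 1 : ℤ), v.1.2), v.2)) ↔ Odd (sg v) := by
      simp only [sg, Int.even_iff, Int.odd_iff]
      omega
    have hE : E2 (((-v.1.1 - 1 : ℤ), v.1.2), v.2) = E2 v := by
      simp only [E2]
      push_cast
      ring
    show t0 q v = s0 q (((-v.1.1 - 1 : ℤ), v.1.2), v.2)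
    rw [s0, t0, hE]
    by_cases h : Odd (sg v)
    · rw [if_pos h, if_pos (hpar.mpr h)]
    · rw [if_neg h, if_neg (fun hc => h (hpar.mp hc))]
  -- the Hadamard bijection between even part of θ₂ and odd part of θ₃
  have hgsupp : ∀ a : P, a ∈ Function.support (g0 q) → Odd (sg a) := by
    intro a ha
    by_contra h
    exact (Function.mem_support.mp ha) (by simp [g0, h])
  have Bridge : (∑' v, s0 q v) = ∑' a, g0 q a := by
    apply tsum_eq_tsum_of_ne_zero_bij (fun x => phi x.1)
    · intro x y hxy
      exact Subtype.ext (phi_inj _ _ (hgsupp _ x.2) (hgsupp _ y.2) hxy)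
    · intro v hv
      have hev : Even (sg v) := by
        by_contra h
        exact (Function.mem_support.mp hv) (by simp [s0, h])
      have hodd : Odd (sg (psi v)) := by
        rw [sg_psi v hev]
        exact Int.odd_iff.mpr (by omega)
      refine ⟨⟨psi v, ?_⟩, phi_psi v hev⟩
      simp only [Function.mem_support, g0, if_pos hodd]
      exact (zpow_pos hq0 _).ne'
    · rintro ⟨a, ha⟩
      have hodd : Odd (sg a) := hgsupp a ha
      have hev : Even (sg (phi a)) := by
        rw [sg_phi a hodd]
        exact ⟨a.1.1 - 1, by ring⟩
      simp only [s0, g0, if_pos hev, if_pos hodd]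
      rw [E2_phi a hodd, Real.rpow_intCast]
  have Eind : (∑' v : P, (if Odd (sg v) then 2 * q ^ Nq v else 0)) = 2 * ∑' a, g0 q a := by
    rw [← tsum_mul_left]
    apply tsum_congr
    intro v
    simp only [g0, mul_ite, mul_zero]
  rw [E2eq, Est, E3, Eind, ← Bridge]
  ring
end

section
/- The map t ↦ θ₄(e^{-πt})² / θ₃(e^{-πt})² (the complementary elliptic modulus at nome e^{-πt}) is a strictly increasing bijection from (0,∞) onto (0,1). -/
/-!
For `t > 0`, `θ₃(e^{-πt})` and `θ₄(e^{-πt})` are Mathlib's kernels `cosKernel 0 t` and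
`cosKernel (1/2) t`. Comparing series termwise, `θ₃` decreases in `t` and `0 < θ₄ < θ₃`.
`θ₄` increases in `t`: for `t ≤ π/2` the Jacobi imaginary transformation writes it as
`∑ₙ e^{-π(n+1/2)²/t} / √t`, a sum of increasing terms, and for `t ≥ 1/π` it is
`1 - 2 ∑ⱼ (e^{-π(2j+1)²t} - e^{-π(2j+2)²t})`, a sum of decreasing pairs. So `θ₄²/θ₃²` is
strictly increasing with values in `(0, 1)`. It tends to `1` as `t → ∞`; by the same
transformation it equals `θ₂(e^{-π/t})² / θ₃(e^{-π/t})²`, which tends to `0` as `t → 0⁺`,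
and the intermediate value theorem gives surjectivity.
-/

open Real Set Filter Topology HurwitzZeta

theorem ContinuousOn.surjOn_Ioo_of_tendsto {α δ : Type*} [ConditionallyCompleteLinearOrder α]
    [TopologicalSpace α] [OrderTopology α] [DenselyOrdered α] [NoMaxOrder α]
    [LinearOrder δ] [TopologicalSpace δ] [OrderTopology δ]
    {f : α → δ} {a : α} {l u : δ}
    (hf : ContinuousOn f (Ioi a)) (hl : Tendsto f (𝓝[>] a) (𝓝 l)) (hu : Tendsto f atTop (𝓝 u)) :
    SurjOn f (Ioi a) (Ioo l u) := by
  have : Nonempty α := ⟨a⟩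
  intro y hy
  obtain ⟨x, hxy, hx⟩ := ((hl.eventually_lt_const hy.1).and self_mem_nhdsWithin).exists
  obtain ⟨z, hyz, hz⟩ := ((hu.eventually_const_lt hy.2).and (eventually_gt_atTop a)).exists
  exact hf.surjOn_Icc hx hz ⟨hxy.le, hyz.le⟩

theorem HasSum.consecutive_pairs {G : Type*} [AddCommGroup G] [UniformSpace G] [IsUniformAddGroup G]
    [CompleteSpace G] [T2Space G] {f : ℕ → G} {a : G} (hf : HasSum f a) :
    HasSum (fun k => f (2 * k) + f (2 * k + 1)) a := by
  have he : Summable fun k => f (2 * k) :=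
    hf.summable.comp_injective (mul_right_injective₀ (two_ne_zero' ℕ))
  have ho : Summable fun k => f (2 * k + 1) :=
    hf.summable.comp_injective ((add_left_injective 1).comp (mul_right_injective₀ (two_ne_zero' ℕ)))
  rw [hf.unique (he.hasSum.even_add_odd ho.hasSum)]
  exact he.hasSum.add ho.hasSum

lemma strictMonoOn_exp_neg_div_div_sqrt (c : ℝ) :
    StrictMonoOn (fun t => rexp (-c / t) / √t) (Ioc 0 (2 * c)) := by
  intro s hs t ht hst
  have hs0 : 0 < s := hs.1
  have ht0 : 0 < t := ht.1
  have hgap : (t - s) / s ≤ 2 * c / s - 2 * c / t := by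
    rw [← sub_nonneg, show 2 * c / s - 2 * c / t - (t - s) / s = (t - s) * (2 * c - t) / (s * t) by
      field_simp]
    exact div_nonneg (mul_nonneg (by linarith) (by linarith [ht.2])) (by positivity)
  have key : t < s * rexp (2 * c / s - 2 * c / t) := calc
    t = s * ((t - s) / s + 1) := by field_simp; ring
    _ < s * rexp ((t - s) / s) := by
      gcongr; exact add_one_lt_exp (div_ne_zero (by linarith) hs0.ne')
    _ ≤ s * rexp (2 * c / s - 2 * c / t) := by gcongr
  refine lt_of_pow_lt_pow_left₀ 2 (by positivity) ?_
  rw [div_pow, div_pow, sq_sqrt hs0.le, sq_sqrt ht0.le, ← exp_nat_mul, ← exp_nat_mul,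
    div_lt_div_iff₀ hs0 ht0]
  calc rexp (2 * (-c / s)) * t < rexp (2 * (-c / s)) * (s * rexp (2 * c / s - 2 * c / t)) := by
        gcongr
    _ = rexp (2 * (-c / t)) * s := by
        rw [mul_left_comm, ← exp_add]; ring_nf

lemma strictAntiOn_exp_neg_mul_sub_exp_neg_mul {A B : ℝ} (hA : 0 < A) (hAB : A < B) :
    StrictAntiOn (fun t => rexp (-A * t) - rexp (-B * t)) (Ici A⁻¹) := by
  have hderiv (t : ℝ) : HasDerivAt (fun t => rexp (-A * t) - rexp (-B * t))
      (rexp (-A * t) * -A - rexp (-B * t) * -B) t := by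
    have hlin (C : ℝ) : HasDerivAt (fun t => -C * t) (-C) t := by
      simpa using (hasDerivAt_id t).const_mul (-C)
    exact (hlin A).exp.sub (hlin B).exp
  refine strictAntiOn_of_deriv_neg (convex_Ici _) (by fun_prop) fun t ht => ?_
  rw [interior_Ici, mem_Ioi] at ht
  rw [(hderiv t).deriv]
  have hB : B < A * rexp ((B - A) * t) := calc
    B = A * (1 + (B - A) * A⁻¹) := by field_simp; ring
    _ < A * (1 + (B - A) * t) := by gcongr
    _ ≤ A * rexp ((B - A) * t) := by gcongr; linarith [add_one_le_exp ((B - A) * t)]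
  have hsplit : rexp (-A * t) = rexp ((B - A) * t) * rexp (-B * t) := by
    rw [← exp_add]; ring_nf
  rw [hsplit]
  nlinarith [exp_pos (-B * t), exp_pos ((B - A) * t)]

namespace HurwitzZeta

lemma cosKernel_eq_evenKernel_inv_div_sqrt (a : UnitAddCircle) {t : ℝ} (ht : 0 < t) :
    cosKernel a t = evenKernel a t⁻¹ / √t := by
  rw [evenKernel_functional_equation, ← sqrt_eq_rpow, sqrt_inv]
  simp only [one_div, inv_inv]
  rw [mul_div_cancel_left₀ _ (sqrt_pos.2 ht).ne']

lemma tendsto_cosKernel_atTop (a : UnitAddCircle) : Tendsto (cosKernel a) atTop (𝓝 1) := by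
  obtain ⟨p, hp, hO⟩ := isBigO_atTop_cosKernel_sub a
  rw [← tendsto_sub_nhds_zero_iff]
  refine hO.trans_tendsto ?_
  simp only [neg_mul]
  exact tendsto_exp_neg_atTop_nhds_zero.comp (tendsto_id.const_mul_atTop hp)

lemma tendsto_evenKernel_atTop {a : UnitAddCircle} (ha : a ≠ 0) :
    Tendsto (evenKernel a) atTop (𝓝 0) := by
  obtain ⟨p, hp, hO⟩ := isBigO_atTop_evenKernel_sub a
  simp only [ha, if_false, sub_zero] at hO
  refine hO.trans_tendsto ?_
  simp only [neg_mul]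
  exact tendsto_exp_neg_atTop_nhds_zero.comp (tendsto_id.const_mul_atTop hp)

lemma evenKernel_pos (a : ℝ) {t : ℝ} (ht : 0 < t) : 0 < evenKernel a t :=
  hasSum_lt (i := 0) (fun _ => (exp_pos _).le) (exp_pos _) hasSum_zero (hasSum_int_evenKernel a ht)

lemma hasSum_int_cosKernel_zero {t : ℝ} (ht : 0 < t) :
    HasSum (fun n : ℤ => rexp (-π * n ^ 2 * t)) (cosKernel 0 t) := by
  simpa [← evenKernel_eq_cosKernel_of_zero] using hasSum_int_evenKernel 0 ht

lemma hasSum_int_cosKernel_half {t : ℝ} (ht : 0 < t) :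
    HasSum (fun n : ℤ => (-1) ^ n * rexp (-π * n ^ 2 * t)) (cosKernel (1 / 2 : ℝ) t) := by
  rw [← Complex.hasSum_ofReal]
  refine (hasSum_int_cosKernel (1 / 2) ht).congr_fun fun n => ?_
  rw [show 2 * π * Complex.I * ((1 / 2 : ℝ) : ℂ) * n = n * (π * Complex.I) by push_cast; ring,
    Complex.exp_int_mul, Complex.exp_pi_mul_I]
  push_cast
  rfl

lemma hasSum_int_cosKernel_half_inv {t : ℝ} (ht : 0 < t) :
    HasSum (fun n : ℤ => rexp (-(π * (n + 1 / 2) ^ 2) / t) / √t) (cosKernel (1 / 2 : ℝ) t) := by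
  rw [cosKernel_eq_evenKernel_inv_div_sqrt _ ht]
  refine ((hasSum_int_evenKernel (1 / 2) (inv_pos.2 ht)).div_const √t).congr_fun fun n => ?_
  ring_nf

lemma hasSum_nat_one_sub_cosKernel_half {t : ℝ} (ht : 0 < t) :
    HasSum (fun j : ℕ =>
        2 * (rexp (-(π * (2 * j + 1) ^ 2) * t) - rexp (-(π * (2 * j + 2) ^ 2) * t)))
      (1 - cosKernel (1 / 2 : ℝ) t) := by
  have h := (hasSum_nat_cosKernel₀ (1 / 2) ht).neg.consecutive_pairs
  rw [neg_sub] at h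
  refine h.congr_fun fun j => ?_
  have hcos (m : ℕ) : cos (2 * π * (1 / 2) * (m + 1)) = (-1) ^ (m + 1) := by
    rw [← cos_nat_mul_pi]; push_cast; ring_nf
  rw [hcos, hcos]
  push_cast
  simp only [pow_succ, pow_mul]
  ring_nf

lemma cosKernel_zero_pos {t : ℝ} (ht : 0 < t) : 0 < cosKernel 0 t := by
  simpa [evenKernel_eq_cosKernel_of_zero] using evenKernel_pos 0 ht

lemma cosKernel_half_pos {t : ℝ} (ht : 0 < t) : 0 < cosKernel (1 / 2 : ℝ) t := by
  rw [cosKernel_eq_evenKernel_inv_div_sqrt _ ht]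
  exact div_pos (evenKernel_pos _ (inv_pos.2 ht)) (sqrt_pos.2 ht)

lemma cosKernel_half_lt_cosKernel_zero {t : ℝ} (ht : 0 < t) :
    cosKernel (1 / 2 : ℝ) t < cosKernel 0 t := by
  refine hasSum_lt (i := 1) (fun n => ?_) ?_ (hasSum_int_cosKernel_half ht)
    (hasSum_int_cosKernel_zero ht)
  · exact mul_le_of_le_one_left (exp_pos _).le (abs_le.1 (abs_neg_one_zpow n).le).2
  · simpa using exp_pos (-π * t)

lemma strictAntiOn_cosKernel_zero : StrictAntiOn (cosKernel 0) (Ioi 0) := by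
  intro s hs t ht hst
  refine hasSum_lt (i := 1) (fun n => exp_le_exp.2 ?_) (exp_lt_exp.2 ?_)
    (hasSum_int_cosKernel_zero (mem_Ioi.1 ht)) (hasSum_int_cosKernel_zero hs)
  · exact mul_le_mul_of_nonpos_left hst.le (by nlinarith [pi_pos])
  · simpa using mul_lt_mul_of_neg_left hst (neg_lt_zero.2 pi_pos)

lemma strictMonoOn_cosKernel_half_Ioc : StrictMonoOn (cosKernel (1 / 2 : ℝ)) (Ioc 0 (π / 2)) := by
  intro s hs t ht hst
  have hterm (n : ℤ) : StrictMonoOn (fun t => rexp (-(π * (n + 1 / 2) ^ 2) / t) / √t)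
      (Ioc 0 (π / 2)) := by
    refine (strictMonoOn_exp_neg_div_div_sqrt _).mono (Ioc_subset_Ioc_right ?_)
    have hquarter : (1 / 4 : ℝ) ≤ (n + 1 / 2) ^ 2 := by
      rcases le_or_gt 0 n with hn | hn
      · have : (0 : ℝ) ≤ n := by exact_mod_cast hn
        nlinarith
      · have : (n : ℝ) ≤ -1 := by exact_mod_cast Int.le_sub_one_of_lt hn
        nlinarith
    nlinarith [pi_pos]
  exact hasSum_lt (i := 0) (fun n => (hterm n hs ht hst).le) (hterm 0 hs ht hst)
    (hasSum_int_cosKernel_half_inv hs.1) (hasSum_int_cosKernel_half_inv ht.1)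

lemma strictMonoOn_cosKernel_half_Ici : StrictMonoOn (cosKernel (1 / 2 : ℝ)) (Ici π⁻¹) := by
  intro s hs t ht hst
  have hpos {x : ℝ} (hx : x ∈ Ici π⁻¹) : 0 < x := (inv_pos.2 pi_pos).trans_le hx
  have hpair (j : ℕ) : StrictAntiOn
      (fun t => rexp (-(π * (2 * j + 1) ^ 2) * t) - rexp (-(π * (2 * j + 2) ^ 2) * t))
      (Ici π⁻¹) := by
    have hj : (1 : ℝ) ≤ (2 * j + 1) ^ 2 := by nlinarith [j.cast_nonneg (α := ℝ)]
    exact (strictAntiOn_exp_neg_mul_sub_exp_neg_mul (by positivity) (by gcongr; linarith)).mono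
      (Ici_subset_Ici.2 (inv_anti₀ pi_pos (le_mul_of_one_le_right pi_pos.le hj)))
  have := hasSum_lt (i := 0) (fun j => mul_le_mul_of_nonneg_left (hpair j hs ht hst).le two_pos.le)
    (mul_lt_mul_of_pos_left (hpair 0 hs ht hst) two_pos)
    (hasSum_nat_one_sub_cosKernel_half (hpos ht)) (hasSum_nat_one_sub_cosKernel_half (hpos hs))
  linarith

lemma strictMonoOn_cosKernel_half : StrictMonoOn (cosKernel (1 / 2 : ℝ)) (Ioi 0) := by
  have hsplit : (1 / 2 : ℝ) ∈ Icc π⁻¹ (π / 2) := by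
    constructor
    · rw [inv_le_comm₀ pi_pos one_half_pos]; linarith [pi_gt_three]
    · linarith [pi_gt_three]
  rw [← Ioc_union_Ici_eq_Ioi one_half_pos]
  exact (strictMonoOn_cosKernel_half_Ioc.mono (Ioc_subset_Ioc_right hsplit.2)).union
    (strictMonoOn_cosKernel_half_Ici.mono (Ici_subset_Ici.2 hsplit.1))
    (isGreatest_Ioc one_half_pos) isLeast_Ici

end HurwitzZeta

noncomputable def complementaryModulus (t : ℝ) : ℝ := (cosKernel (1 / 2 : ℝ) t / cosKernel 0 t) ^ 2

lemma strictMonoOn_complementaryModulus : StrictMonoOn complementaryModulus (Ioi 0) := by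
  intro s hs t ht hst
  have hratio : cosKernel (1 / 2 : ℝ) s / cosKernel 0 s < cosKernel (1 / 2 : ℝ) t / cosKernel 0 t :=
    div_lt_div₀ (strictMonoOn_cosKernel_half hs ht hst) (strictAntiOn_cosKernel_zero hs ht hst).le
      (cosKernel_half_pos ht).le (cosKernel_zero_pos ht)
  exact pow_lt_pow_left₀ hratio
    (div_pos (cosKernel_half_pos hs) (cosKernel_zero_pos hs)).le two_ne_zero

lemma mapsTo_complementaryModulus : MapsTo complementaryModulus (Ioi 0) (Ioo 0 1) := by
  intro t ht
  have hratio : cosKernel (1 / 2 : ℝ) t / cosKernel 0 t ∈ Ioo 0 1 :=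
    ⟨div_pos (cosKernel_half_pos ht) (cosKernel_zero_pos ht),
      (div_lt_one (cosKernel_zero_pos ht)).2 (cosKernel_half_lt_cosKernel_zero ht)⟩
  exact ⟨pow_pos hratio.1 2, pow_lt_one₀ hratio.1.le hratio.2 two_ne_zero⟩

lemma continuousOn_complementaryModulus : ContinuousOn complementaryModulus (Ioi 0) :=
  ((continuousOn_cosKernel _).div (continuousOn_cosKernel _)
    fun _ ht => (cosKernel_zero_pos ht).ne').pow 2

lemma tendsto_complementaryModulus_atTop : Tendsto complementaryModulus atTop (𝓝 1) := by
  have h :=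
    ((tendsto_cosKernel_atTop (1 / 2 : ℝ)).div (tendsto_cosKernel_atTop 0) one_ne_zero).pow 2
  rwa [div_one, one_pow] at h

lemma tendsto_complementaryModulus_nhdsGT_zero :
    Tendsto complementaryModulus (𝓝[>] 0) (𝓝 0) := by
  have hhalf : ((1 / 2 : ℝ) : UnitAddCircle) ≠ 0 := by
    rw [Ne, AddCircle.coe_eq_zero_iff_of_mem_Ico ⟨by norm_num, by norm_num⟩]
    norm_num
  have hdual : Tendsto (fun u => (evenKernel (1 / 2 : ℝ) u / cosKernel 0 u) ^ 2) atTop (𝓝 0) := by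
    simpa using ((tendsto_evenKernel_atTop hhalf).div (tendsto_cosKernel_atTop 0) one_ne_zero).pow 2
  refine (hdual.comp tendsto_inv_nhdsGT_zero).congr' ?_
  filter_upwards [self_mem_nhdsWithin] with t ht
  rw [Function.comp_apply, complementaryModulus, cosKernel_eq_evenKernel_inv_div_sqrt _ ht,
    cosKernel_eq_evenKernel_inv_div_sqrt _ ht, evenKernel_eq_cosKernel_of_zero,
    div_div_div_cancel_right₀ (sqrt_pos.2 ht).ne']

lemma bijOn_complementaryModulus : BijOn complementaryModulus (Ioi 0) (Ioo 0 1) :=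
  ⟨mapsTo_complementaryModulus, strictMonoOn_complementaryModulus.injOn,
    continuousOn_complementaryModulus.surjOn_Ioo_of_tendsto
      tendsto_complementaryModulus_nhdsGT_zero tendsto_complementaryModulus_atTop⟩

lemma exp_neg_pi_mul_zpow_sq (t : ℝ) (n : ℤ) : rexp (-π * t) ^ (n ^ 2) = rexp (-π * n ^ 2 * t) := by
  rw [← rpow_intCast, ← exp_mul]
  push_cast
  ring_nf

lemma theta3_exp_neg_pi_mul {t : ℝ} (ht : 0 < t) : theta3 (rexp (-π * t)) = cosKernel 0 t := by
  simp only [theta3, exp_neg_pi_mul_zpow_sq]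
  exact (hasSum_int_cosKernel_zero ht).tsum_eq

lemma theta4_exp_neg_pi_mul {t : ℝ} (ht : 0 < t) :
    theta4 (rexp (-π * t)) = cosKernel (1 / 2 : ℝ) t := by
  simp only [theta4, exp_neg_pi_mul_zpow_sq]
  exact (hasSum_int_cosKernel_half ht).tsum_eq

theorem complementary_modulus_strictMono_bijOn :
    StrictMonoOn (fun t : ℝ => theta4 (Real.exp (-Real.pi * t)) ^ 2 /
        theta3 (Real.exp (-Real.pi * t)) ^ 2) (Set.Ioi 0) ∧
    Set.BijOn (fun t : ℝ => theta4 (Real.exp (-Real.pi * t)) ^ 2 /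
        theta3 (Real.exp (-Real.pi * t)) ^ 2) (Set.Ioi 0) (Set.Ioo 0 1) := by
  have heq : EqOn complementaryModulus (fun t : ℝ => theta4 (Real.exp (-Real.pi * t)) ^ 2 /
      theta3 (Real.exp (-Real.pi * t)) ^ 2) (Ioi 0) := fun t ht => by
    dsimp only
    rw [complementaryModulus, div_pow, theta3_exp_neg_pi_mul ht, theta4_exp_neg_pi_mul ht]
  exact ⟨strictMonoOn_complementaryModulus.congr heq, bijOn_complementaryModulus.congr heq⟩
end
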